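/- arXiv:1503.02654 — 2 statements merged into one kernel-verified Lean document; each statement's English description precedes it below -/
import Mathlib

section
/- Exchange stability under disjoint additions: let T be a rooted tree with root r, P ⊆ leaves, a, b leaves not in P, c the least common ancestor of a and b, and d the child of c on the path toward a. If f⃗(r⇝a,P) ≤_L f⃗(r⇝b,P) and X is a set of leaves disjoint from {a,b} with no leaf of X a descendant of d, then f⃗(P ∪ X ∪ {a}) ≤_L f⃗(P ∪ X ∪ {b}). -/
open scoped Classical

/-- A rooted tree on a finite vertex set `V`, given by a parent function under which
every vertex reaches the root. -/
structure FailTree (V : Type*) [Fintype V] where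
  root : V
  parent : V → V
  parent_root : parent root = root
  reaches_root : ∀ v, ∃ n : ℕ, parent^[n] v = root

namespace FailTree

variable {V : Type*} [Fintype V]

/-- `T.Desc u v` : `u` is a descendant of `v` (every node is a descendant of itself). -/
def Desc (T : FailTree V) (u v : V) : Prop := ∃ n : ℕ, T.parent^[n] u = v

/-- A leaf is a node with no children. -/
def IsLeaf (T : FailTree V) (v : V) : Prop := ∀ u, T.parent u = v → u = v

noncomputable def leaves (T : FailTree V) : Finset V :=
  Finset.univ.filter fun v => T.IsLeaf v

/-- The failure number `f(v, P)` of node `v` under placement `P`: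
the number of members of `P` that are descendants of `v`. -/
noncomputable def fnum (T : FailTree V) (v : V) (P : Finset V) : ℕ :=
  (P.filter fun p => T.Desc p v).card

/-- The failure aggregate restricted to a set `S` of nodes: entry `i` counts the
nodes of `S` having failure number `i`. -/
noncomputable def faggOn (T : FailTree V) (S P : Finset V) : ℕ → ℕ :=
  fun i => (S.filter fun v => T.fnum v P = i).card

/-- The failure aggregate `f⃗(P)`: entry `i` counts the nodes with failure number `i`. -/
noncomputable def fagg (T : FailTree V) (P : Finset V) : ℕ → ℕ :=
  T.faggOn Finset.univ P

/-- The node set of the path from the root to `x`, i.e. all ancestors of `x`. -/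
noncomputable def pathTo (T : FailTree V) (x : V) : Finset V :=
  Finset.univ.filter fun v => T.Desc x v

/-- The number of leaves in the subtree rooted at `v`. -/
noncomputable def leafCount (T : FailTree V) (v : V) : ℕ :=
  (T.leaves.filter fun l => T.Desc l v).card

end FailTree

/-- Strict lexicographic comparison of failure aggregates; entries with higher index
(higher failure number) are more significant. -/
def AggLt (p q : ℕ → ℕ) : Prop := ∃ m, p m < q m ∧ ∀ i, m < i → p i = q i

/-- Lexicographic comparison (non-strict) of failure aggregates. -/
def AggLe (p q : ℕ → ℕ) : Prop := p = q ∨ AggLt p q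

/-!
Adding a leaf raises by one the failure numbers of exactly its ancestors. Hence exchanging
`a` for `b` only matters on `A = pathTo a \ pathTo b` and `B = pathTo b \ pathTo a`: with `a`
the aggregate of `A` is shifted up, with `b` that of `B`, and shifting the lexicographically
smaller of the two is the better move. So it suffices that `A` is no worse than `B` under
`P ∪ X`. Under `P` this is the hypothesis with the common part of the two paths cancelled;
adding `X` leaves `A` untouched, as `A` lies in the subtree of `d`, and can only make `B`
worse.
-/

/-- The aggregate of a node set after each of its failure numbers has grown by one. -/
def shiftAgg (p : ℕ → ℕ) : ℕ → ℕ
  | 0 => 0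
  | j + 1 => p j

namespace AggLe

theorem trans {p q r : ℕ → ℕ} (h₁ : AggLe p q) (h₂ : AggLe q r) : AggLe p r := by
  rcases h₁ with rfl | ⟨m₁, hm₁, he₁⟩
  · exact h₂
  rcases h₂ with rfl | ⟨m₂, hm₂, he₂⟩
  · exact Or.inr ⟨m₁, hm₁, he₁⟩
  rcases lt_trichotomy m₁ m₂ with hlt | rfl | hgt
  · exact Or.inr ⟨m₂, he₁ m₂ hlt ▸ hm₂,
      fun i hi => (he₁ i (by omega)).trans (he₂ i hi)⟩
  · exact Or.inr ⟨m₁, hm₁.trans hm₂, fun i hi => (he₁ i hi).trans (he₂ i hi)⟩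
  · exact Or.inr ⟨m₁, he₂ m₁ hgt ▸ hm₁,
      fun i hi => (he₁ i hi).trans (he₂ i (by omega))⟩

theorem add_right {p q : ℕ → ℕ} (h : AggLe p q) (s : ℕ → ℕ) : AggLe (p + s) (q + s) := by
  rcases h with rfl | ⟨m, hm, he⟩
  · exact Or.inl rfl
  · exact Or.inr ⟨m, by simp only [Pi.add_apply]; omega,
      fun i hi => by simp only [Pi.add_apply, he i hi]⟩

theorem add_left {p q : ℕ → ℕ} (h : AggLe p q) (s : ℕ → ℕ) : AggLe (s + p) (s + q) := by
  simpa only [add_comm s] using h.add_right s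

theorem add {p q p' q' : ℕ → ℕ} (h : AggLe p q) (h' : AggLe p' q') :
    AggLe (p + p') (q + q') :=
  (h.add_right p').trans (h'.add_left q)

theorem of_add_right {p q s : ℕ → ℕ} (h : AggLe (p + s) (q + s)) : AggLe p q := by
  rcases h with h | ⟨m, hm, he⟩
  · exact Or.inl (add_right_cancel h)
  · exact Or.inr ⟨m, by simpa only [Pi.add_apply, add_lt_add_iff_right] using hm,
      fun i hi => by simpa only [Pi.add_apply, add_left_inj] using he i hi⟩

theorem single_one {x y : ℕ} (hxy : x ≤ y) : AggLe (Pi.single x 1) (Pi.single y 1) := by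
  rcases hxy.eq_or_lt with rfl | hlt
  · exact Or.inl rfl
  · refine Or.inr ⟨y, by simp [hlt.ne'], fun i hi => ?_⟩
    simp [hi.ne', (hlt.trans hi).ne']

/-- The highest index `m` where `p` and `q` differ becomes the highest index `m + 1` where the
two sides differ. -/
theorem shiftAgg_add {p q : ℕ → ℕ} (h : AggLe p q) :
    AggLe (shiftAgg p + q) (p + shiftAgg q) := by
  rcases h with rfl | ⟨m, hm, he⟩
  · exact Or.inl (add_comm _ _)
  refine Or.inr ⟨m + 1, ?_, fun i hi => ?_⟩
  · simp only [Pi.add_apply, shiftAgg, he (m + 1) (by omega)]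
    omega
  · obtain ⟨j, rfl⟩ : ∃ j, i = j + 1 := ⟨i - 1, by omega⟩
    simp only [Pi.add_apply, shiftAgg, he j (by omega), he (j + 1) (by omega), add_comm]

end AggLe

namespace FailTree

variable {V : Type*} [Fintype V] (T : FailTree V)

theorem desc_trans {u v w : V} (h₁ : T.Desc u v) (h₂ : T.Desc v w) : T.Desc u w := by
  obtain ⟨n, rfl⟩ := h₁
  obtain ⟨m, rfl⟩ := h₂
  exact ⟨m + n, Function.iterate_add_apply _ _ _ _⟩

theorem desc_or_desc_of_desc {u v w : V} (hv : T.Desc u v) (hw : T.Desc u w) :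
    T.Desc v w ∨ T.Desc w v := by
  obtain ⟨n, rfl⟩ := hv
  obtain ⟨m, rfl⟩ := hw
  rcases le_total n m with hnm | hmn
  · exact Or.inl ⟨m - n, by rw [← Function.iterate_add_apply, Nat.sub_add_cancel hnm]⟩
  · exact Or.inr ⟨n - m, by rw [← Function.iterate_add_apply, Nat.sub_add_cancel hmn]⟩

theorem eq_or_desc_parent_of_desc {u w : V} (h : T.Desc u w) :
    u = w ∨ T.Desc (T.parent u) w := by
  obtain ⟨_ | n, rfl⟩ := h
  · exact Or.inl rfl
  · exact Or.inr ⟨n, (Function.iterate_succ_apply _ _ _).symm⟩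

theorem mem_pathTo {x v : V} : v ∈ T.pathTo x ↔ T.Desc x v := by
  simp [pathTo]

theorem desc_of_mem_pathTo_sdiff {a b d v : V} (hda : T.Desc a d)
    (hb : T.Desc b (T.parent d)) (hv : v ∈ T.pathTo a \ T.pathTo b) : T.Desc v d := by
  rw [Finset.mem_sdiff, mem_pathTo, mem_pathTo] at hv
  rcases T.desc_or_desc_of_desc hv.1 hda with hvd | hdv
  · exact hvd
  rcases T.eq_or_desc_parent_of_desc hdv with rfl | hcv
  · exact ⟨0, rfl⟩
  · exact absurd (T.desc_trans hb hcv) hv.2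

theorem fnum_insert {a : V} {Q : Finset V} (haQ : a ∉ Q) (v : V) :
    T.fnum v (insert a Q) = T.fnum v Q + if T.Desc a v then 1 else 0 := by
  unfold fnum
  rw [Finset.filter_insert]
  split_ifs with hav
  · exact Finset.card_insert_of_notMem fun h => haQ (Finset.mem_filter.mp h).1
  · rfl

theorem fnum_union_of_forall_not_desc {v : V} {P X : Finset V} (hX : ∀ x ∈ X, ¬T.Desc x v) :
    T.fnum v (P ∪ X) = T.fnum v P := by
  unfold fnum
  rw [Finset.filter_union, Finset.filter_false_of_mem hX, Finset.union_empty]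

theorem fnum_mono {v : V} {P Q : Finset V} (h : P ⊆ Q) : T.fnum v P ≤ T.fnum v Q :=
  Finset.card_le_card (Finset.filter_subset_filter _ h)

theorem faggOn_congr {S P Q : Finset V} (h : ∀ v ∈ S, T.fnum v P = T.fnum v Q) :
    T.faggOn S P = T.faggOn S Q :=
  funext fun _ => congrArg Finset.card (Finset.filter_congr fun v hv => by rw [h v hv])

theorem faggOn_eq_shiftAgg {S P Q : Finset V} (h : ∀ v ∈ S, T.fnum v Q = T.fnum v P + 1) :
    T.faggOn S Q = shiftAgg (T.faggOn S P) := by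
  funext i
  cases i with
  | zero =>
    exact Finset.card_eq_zero.mpr (Finset.filter_false_of_mem fun v hv => by rw [h v hv]; omega)
  | succ j =>
    exact congrArg Finset.card (Finset.filter_congr fun v hv => by rw [h v hv]; omega)

theorem faggOn_union {S S' : Finset V} (h : Disjoint S S') (P : Finset V) :
    T.faggOn (S ∪ S') P = T.faggOn S P + T.faggOn S' P :=
  funext fun _ => by
    simp only [faggOn, Pi.add_apply, Finset.filter_union,
      Finset.card_union_of_disjoint (Finset.disjoint_filter_filter h)]

theorem faggOn_sdiff_add_inter (S S' P : Finset V) :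
    T.faggOn (S \ S') P + T.faggOn (S ∩ S') P = T.faggOn S P := by
  rw [← faggOn_union _ (Finset.disjoint_sdiff_inter S S'), Finset.sdiff_union_inter]

theorem faggOn_insert {s : V} {S : Finset V} (hs : s ∉ S) (P : Finset V) :
    T.faggOn (insert s S) P = T.faggOn S P + Pi.single (T.fnum s P) 1 := by
  rw [Finset.insert_eq, add_comm, faggOn_union _ (Finset.disjoint_singleton_left.mpr hs)]
  congr 1
  funext i
  by_cases hi : i = T.fnum s P <;> simp [faggOn, Finset.filter_singleton, hi, eq_comm]

/-- Node by node: each node contributes a unit vector at its failure number, and `AggLe` is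
compatible with addition. -/
theorem faggOn_mono (S : Finset V) {P Q : Finset V} (h : P ⊆ Q) :
    AggLe (T.faggOn S P) (T.faggOn S Q) := by
  induction S using Finset.induction_on with
  | empty => exact Or.inl (funext fun _ => by simp [faggOn])
  | insert s S hs ih =>
    rw [T.faggOn_insert hs, T.faggOn_insert hs]
    exact ih.add (AggLe.single_one (T.fnum_mono h))

/-- Exchanging `a` for `b` only changes failure numbers on the two path differences: by one
on `pathTo a \ pathTo b` for `a`, by one on `pathTo b \ pathTo a` for `b`. -/
theorem fagg_insert_le_fagg_insert {a b : V} {Q : Finset V} (haQ : a ∉ Q) (hbQ : b ∉ Q)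
    (h : AggLe (T.faggOn (T.pathTo a \ T.pathTo b) Q)
      (T.faggOn (T.pathTo b \ T.pathTo a) Q)) :
    AggLe (T.fagg (insert a Q)) (T.fagg (insert b Q)) := by
  set A := T.pathTo a \ T.pathTo b
  set B := T.pathTo b \ T.pathTo a
  have hA : ∀ v ∈ A, T.Desc a v ∧ ¬T.Desc b v := fun v hv => by
    simpa only [A, Finset.mem_sdiff, mem_pathTo] using hv
  have hB : ∀ v ∈ B, T.Desc b v ∧ ¬T.Desc a v := fun v hv => by
    simpa only [B, Finset.mem_sdiff, mem_pathTo] using hv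
  have hAB : Disjoint A B :=
    Finset.disjoint_left.mpr fun v hvA hvB => (hA v hvA).2 (hB v hvB).1
  set R := Finset.univ \ (A ∪ B)
  have hR : ∀ v ∈ R, (T.Desc a v ↔ T.Desc b v) := fun v hv => by
    simp only [R, A, B, Finset.mem_sdiff, Finset.mem_union, mem_pathTo] at hv
    tauto
  have hsplit : ∀ W, T.fagg W = T.faggOn A W + T.faggOn B W + T.faggOn R W := fun W => by
    rw [← T.faggOn_union hAB, ← T.faggOn_union Finset.disjoint_sdiff, fagg,
      Finset.union_sdiff_of_subset (Finset.subset_univ _)]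
  have hAa : T.faggOn A (insert a Q) = shiftAgg (T.faggOn A Q) :=
    T.faggOn_eq_shiftAgg fun v hv => by simp [T.fnum_insert haQ, (hA v hv).1]
  have hAb : T.faggOn A (insert b Q) = T.faggOn A Q :=
    T.faggOn_congr fun v hv => by simp [T.fnum_insert hbQ, (hA v hv).2]
  have hBa : T.faggOn B (insert a Q) = T.faggOn B Q :=
    T.faggOn_congr fun v hv => by simp [T.fnum_insert haQ, (hB v hv).2]
  have hBb : T.faggOn B (insert b Q) = shiftAgg (T.faggOn B Q) :=
    T.faggOn_eq_shiftAgg fun v hv => by simp [T.fnum_insert hbQ, (hB v hv).1]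
  have hRab : T.faggOn R (insert a Q) = T.faggOn R (insert b Q) :=
    T.faggOn_congr fun v hv => by simp only [T.fnum_insert haQ, T.fnum_insert hbQ, hR v hv]
  rw [hsplit, hsplit, hAa, hAb, hBa, hBb, hRab]
  exact h.shiftAgg_add.add_right _

end FailTree

theorem exchange_stable_general {V : Type*} [Fintype V] (T : FailTree V)
    (P : Finset V)
    (a b : V) (haP : a ∉ P) (hbP : b ∉ P)
    (c : V) (hcb : T.Desc b c)
    (d : V) (hd : T.parent d = c) (hda : T.Desc a d)
    (X : Finset V) (haX : a ∉ X) (hbX : b ∉ X)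
    (hXd : ∀ x ∈ X, ¬ T.Desc x d)
    (h : AggLe (T.faggOn (T.pathTo a) P) (T.faggOn (T.pathTo b) P)) :
    AggLe (T.fagg (insert a (P ∪ X))) (T.fagg (insert b (P ∪ X))) := by
  subst hd
  have hdiff : AggLe (T.faggOn (T.pathTo a \ T.pathTo b) P)
      (T.faggOn (T.pathTo b \ T.pathTo a) P) := by
    rw [← T.faggOn_sdiff_add_inter (T.pathTo a) (T.pathTo b),
      ← T.faggOn_sdiff_add_inter (T.pathTo b) (T.pathTo a), Finset.inter_comm] at h
    exact h.of_add_right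
  have hXA : T.faggOn (T.pathTo a \ T.pathTo b) (P ∪ X) =
      T.faggOn (T.pathTo a \ T.pathTo b) P :=
    T.faggOn_congr fun v hv => T.fnum_union_of_forall_not_desc fun x hx hxv =>
      hXd x hx (T.desc_trans hxv (T.desc_of_mem_pathTo_sdiff hda hcb hv))
  refine T.fagg_insert_le_fagg_insert (by simp [haP, haX]) (by simp [hbP, hbX]) ?_
  rw [hXA]
  exact hdiff.trans (T.faggOn_mono _ Finset.subset_union_left)

/-- Lemma 3 (exchange stability under disjoint additions): if the root-to-`a` path is
lexicographically no worse than the root-to-`b` path under `P`, and `X` is a set of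
leaves avoiding `a`, `b` and the subtree of `d` (the child of the least common
ancestor `c` of `a` and `b` towards `a`), then `f⃗(P ∪ X ∪ {a}) ≤_L f⃗(P ∪ X ∪ {b})`. -/
theorem exchange_stable {V : Type*} [Fintype V] (T : FailTree V)
    (P : Finset V) (hP : P ⊆ T.leaves)
    (a b : V) (ha : a ∈ T.leaves) (hb : b ∈ T.leaves) (haP : a ∉ P) (hbP : b ∉ P)
    (c : V) (hca : T.Desc a c) (hcb : T.Desc b c)
    (hlca : ∀ c' : V, T.Desc a c' → T.Desc b c' → T.Desc c c')
    (d : V) (hd : T.parent d = c) (hd' : d ≠ c) (hda : T.Desc a d)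
    (X : Finset V) (hX : X ⊆ T.leaves) (haX : a ∉ X) (hbX : b ∉ X)
    (hXd : ∀ x ∈ X, ¬ T.Desc x d)
    (h : AggLe (T.faggOn (T.pathTo a) P) (T.faggOn (T.pathTo b) P)) :
    AggLe (T.fagg (insert a (P ∪ X))) (T.fagg (insert b (P ∪ X))) :=
  exchange_stable_general T P a b haP hbP c hcb d hd hda X haX hbX hXd h
end

section
/- If two placements of equal size induce the same multiset of failure numbers along the root-to-leaf paths they change, their failure aggregates are equal: for P ⊆ leaves and leaves a, b ∉ P, if f⃗(r⇝a,P) = f⃗(r⇝b,P) then f⃗(P ∪ {a}) = f⃗(P ∪ {b}). -/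
open scoped Classical

/-!
Adding a node `x ∉ P` raises the failure number by one exactly on the path `r ⇝ x` and leaves
it unchanged elsewhere. Hence `f⃗(P ∪ {x})` is the aggregate of `P` off the path plus the path
aggregate shifted by one, and both pieces are determined by `f⃗(P)` and `f⃗(r ⇝ x, P)`.
-/

namespace FailTree

variable {V : Type*} [Fintype V] (T : FailTree V)

theorem fnum_insert_of_not_desc {P : Finset V} {x v : V} (hv : ¬ T.Desc x v) :
    T.fnum v (insert x P) = T.fnum v P := by
  simp only [fnum, Finset.filter_insert, hv, if_false]

theorem fnum_insert_of_desc {P : Finset V} {x v : V} (hx : x ∉ P) (hv : T.Desc x v) :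
    T.fnum v (insert x P) = T.fnum v P + 1 := by
  rw [fnum, Finset.filter_insert, if_pos hv,
    Finset.card_insert_of_notMem fun hm => hx (Finset.mem_filter.mp hm).1, fnum]

theorem faggOn_add_faggOn_compl (S P : Finset V) (i : ℕ) :
    T.faggOn S P i + T.faggOn Sᶜ P i = T.fagg P i := by
  rw [fagg, faggOn, faggOn, faggOn, ← Finset.card_union_of_disjoint
    (Finset.disjoint_filter_filter disjoint_compl_right), ← Finset.filter_union,
    Finset.union_compl]

theorem faggOn_compl_eq_of_faggOn_eq {S S' P : Finset V} (h : T.faggOn S P = T.faggOn S' P) :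
    T.faggOn Sᶜ P = T.faggOn S'ᶜ P := by
  funext i
  have hS := T.faggOn_add_faggOn_compl S P i
  have hS' := T.faggOn_add_faggOn_compl S' P i
  rw [h] at hS
  omega

theorem faggOn_compl_pathTo_insert (P : Finset V) (x : V) :
    T.faggOn (T.pathTo x)ᶜ (insert x P) = T.faggOn (T.pathTo x)ᶜ P := by
  funext i
  refine congrArg Finset.card (Finset.filter_congr fun v hv => ?_)
  have hv : ¬ T.Desc x v := by simpa [pathTo] using hv
  rw [T.fnum_insert_of_not_desc hv]

theorem faggOn_pathTo_insert {P : Finset V} {x : V} (hx : x ∉ P) (i : ℕ) :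
    T.faggOn (T.pathTo x) (insert x P) i =
      ((T.pathTo x).filter fun v => T.fnum v P + 1 = i).card := by
  refine congrArg Finset.card (Finset.filter_congr fun v hv => ?_)
  have hv : T.Desc x v := by simpa [pathTo] using hv
  rw [T.fnum_insert_of_desc hx hv]

theorem faggOn_pathTo_insert_eq {P Q : Finset V} {x y : V} (hx : x ∉ P) (hy : y ∉ Q)
    (h : T.faggOn (T.pathTo x) P = T.faggOn (T.pathTo y) Q) :
    T.faggOn (T.pathTo x) (insert x P) = T.faggOn (T.pathTo y) (insert y Q) := by
  funext i
  rw [T.faggOn_pathTo_insert hx, T.faggOn_pathTo_insert hy]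
  cases i with
  | zero => simp
  | succ j =>
    simp only [Nat.add_right_cancel_iff]
    exact congrFun h j

end FailTree

theorem path_eq_imp_placement_eq_general {V : Type*} [Fintype V] (T : FailTree V)
    (P : Finset V)
    (a b : V) (haP : a ∉ P) (hbP : b ∉ P)
    (h : T.faggOn (T.pathTo a) P = T.faggOn (T.pathTo b) P) :
    T.fagg (insert a P) = T.fagg (insert b P) := by
  funext i
  rw [← T.faggOn_add_faggOn_compl (T.pathTo a), ← T.faggOn_add_faggOn_compl (T.pathTo b),
    T.faggOn_compl_pathTo_insert, T.faggOn_compl_pathTo_insert,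
    T.faggOn_pathTo_insert_eq haP hbP h, T.faggOn_compl_eq_of_faggOn_eq h]

/-- If the failure aggregates along the root-to-`a` and root-to-`b` paths coincide,
then the failure aggregates of `P ∪ {a}` and `P ∪ {b}` coincide. -/
theorem path_eq_imp_placement_eq {V : Type*} [Fintype V] (T : FailTree V)
    (P : Finset V) (hP : P ⊆ T.leaves)
    (a b : V) (ha : a ∈ T.leaves) (hb : b ∈ T.leaves) (haP : a ∉ P) (hbP : b ∉ P)
    (h : T.faggOn (T.pathTo a) P = T.faggOn (T.pathTo b) P) :
    T.fagg (insert a P) = T.fagg (insert b P) :=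
  path_eq_imp_placement_eq_general T P a b haP hbP h
end
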